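/- The symmetric part of the n×n matrix ΦᵀD(γP − I)Φ is negative definite, i.e., ΦᵀD(γP − I)Φ + Φᵀ(γP − I)ᵀDΦ ≺ 0; consequently ΦᵀD(γP − I)Φ is invertible. -/

import Mathlib

open Matrix

/-
Write `⟨u, v⟩_d = ∑ₛ d(s) u(s) v(s)`. For a row-stochastic `P` with stationary distribution `d`,
the inequality `2 y(s) y(t) ≤ y(s)² + y(t)²`, averaged against the weights `d(s) P(s,t)` (whose
row and column marginals are both `d`), gives `⟨y, P y⟩_d ≤ ⟨y, y⟩_d`. Hence for `y ≠ 0`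
`⟨y, (γP - I) y⟩_d ≤ (γ - 1) ⟨y, y⟩_d < 0`. Since `Φ` has full column rank, `y = Φ x ≠ 0` for
`x ≠ 0`, so the quadratic form of `M = ΦᵀD(γP - I)Φ` is negative definite; the same then holds for
`M + Mᵀ`, which has twice the quadratic form, and `M` has trivial kernel.
-/

theorem Finset.sum_sum_mul_mul_le_sum_mul_sq {ι : Type*} [Fintype ι] (w : ι → ι → ℝ)
    (a y : ι → ℝ) (hw : ∀ s t, 0 ≤ w s t) (hrow : ∀ s, ∑ t, w s t = a s)
    (hcol : ∀ t, ∑ s, w s t = a t) :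
    ∑ s, ∑ t, w s t * (y s * y t) ≤ ∑ s, a s * y s ^ 2 := by
  calc ∑ s, ∑ t, w s t * (y s * y t)
      ≤ ∑ s, ∑ t, w s t * ((y s ^ 2 + y t ^ 2) / 2) := by
        gcongr with s _ t _
        · exact hw s t
        · nlinarith [sq_nonneg (y s - y t)]
    _ = (∑ s, ∑ t, w s t * y s ^ 2 + ∑ s, ∑ t, w s t * y t ^ 2) / 2 := by
        simp only [mul_add, add_div, Finset.sum_add_distrib, Finset.sum_div, mul_div_assoc]
    _ = ∑ s, a s * y s ^ 2 := by
        rw [Finset.sum_comm (f := fun s t => w s t * y t ^ 2)]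
        simp only [← Finset.sum_mul, hrow, hcol]
        ring

namespace Matrix

variable {ι m : Type*} [Fintype ι]

theorem mulVec_injective_of_rank_eq_card {K : Type*} [Field K] (A : Matrix m ι K)
    (h : A.rank = Fintype.card ι) : Function.Injective A.mulVec :=
  mulVec_injective_iff.2 <| linearIndependent_iff_card_eq_finrank_span.2 <| by
    rw [← h, rank_eq_finrank_span_cols]; rfl

theorem dotProduct_transpose_mul_mul_mulVec {R : Type*} [CommSemiring R] [Fintype m]
    (Φ : Matrix ι m R) (A : Matrix ι ι R) (x : m → R) :
    x ⬝ᵥ (Φᵀ * A * Φ) *ᵥ x = Φ *ᵥ x ⬝ᵥ A *ᵥ Φ *ᵥ x := by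
  rw [← mulVec_mulVec, ← mulVec_mulVec, dotProduct_transpose_mulVec, dotProduct_comm]

theorem dotProduct_add_transpose_mulVec {R : Type*} [CommSemiring R] (M : Matrix ι ι R)
    (x : ι → R) : x ⬝ᵥ (M + Mᵀ) *ᵥ x = 2 * (x ⬝ᵥ M *ᵥ x) := by
  rw [add_mulVec, dotProduct_add, dotProduct_transpose_mulVec, two_mul]

theorem isUnit_of_dotProduct_mulVec_neg [DecidableEq ι] {K : Type*} [Field K] [PartialOrder K]
    {M : Matrix ι ι K} (hM : ∀ x, x ≠ 0 → x ⬝ᵥ M *ᵥ x < 0) : IsUnit M := by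
  refine mulVec_injective_iff_isUnit.1 <|
    (injective_iff_map_eq_zero M.mulVecLin).2 fun x hx => by_contra fun hne => ?_
  simpa [show M *ᵥ x = 0 from hx] using hM x hne

theorem dotProduct_diagonal_mulVec_pos [DecidableEq ι] {d : ι → ℝ} (hd : ∀ s, 0 < d s)
    {y : ι → ℝ} (hy : y ≠ 0) :
    0 < y ⬝ᵥ diagonal d *ᵥ y := by
  simpa using (PosDef.diagonal hd).dotProduct_mulVec_pos hy

theorem dotProduct_diagonal_mul_mulVec_le [DecidableEq ι] {P : Matrix ι ι ℝ}
    (hP : P ∈ rowStochastic ℝ ι) {d : ι → ℝ} (hd : ∀ s, 0 ≤ d s) (hstat : d ᵥ* P = d) (y : ι → ℝ) :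
    y ⬝ᵥ (diagonal d * P) *ᵥ y ≤ y ⬝ᵥ diagonal d *ᵥ y := by
  have hrow (s : ι) : ∑ t, d s * P s t = d s := by
    rw [← Finset.mul_sum, sum_row_of_mem_rowStochastic hP, mul_one]
  have hcol (t : ι) : ∑ s, d s * P s t = d t := by
    simpa [vecMul, dotProduct] using congrFun hstat t
  convert Finset.sum_sum_mul_mul_le_sum_mul_sq (fun s t => d s * P s t) d y
    (fun s t => mul_nonneg (hd s) (nonneg_of_mem_rowStochastic hP)) hrow hcol using 1
  · simp only [dotProduct, mulVec, diagonal_mul, Finset.mul_sum]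
    exact Finset.sum_congr rfl fun s _ => Finset.sum_congr rfl fun t _ => by ring
  · simp only [dotProduct, mulVec_diagonal]
    exact Finset.sum_congr rfl fun s _ => by ring

theorem dotProduct_diagonal_mul_smul_sub_one_mulVec_neg [DecidableEq ι] {P : Matrix ι ι ℝ}
    (hP : P ∈ rowStochastic ℝ ι) {d : ι → ℝ} (hd : ∀ s, 0 < d s) (hstat : d ᵥ* P = d)
    {γ : ℝ} (hγ0 : 0 ≤ γ) (hγ1 : γ < 1) {y : ι → ℝ} (hy : y ≠ 0) :
    y ⬝ᵥ (diagonal d * (γ • P - 1)) *ᵥ y < 0 := by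
  have hpos := dotProduct_diagonal_mulVec_pos hd hy
  have hle := dotProduct_diagonal_mul_mulVec_le hP (fun s => (hd s).le) hstat y
  rw [Matrix.mul_sub, Matrix.mul_one, mul_smul_comm, sub_mulVec, smul_mulVec, dotProduct_sub,
    dotProduct_smul, smul_eq_mul]
  nlinarith

end Matrix

theorem td_matrix_symmetric_part_negative_definite_general
    (N n : ℕ)
    (P : Matrix (Fin N) (Fin N) ℝ) (d : Fin N → ℝ) (γ : ℝ)
    (Φ : Matrix (Fin N) (Fin n) ℝ)
    (hPnonneg : ∀ i j, 0 ≤ P i j)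
    (hProw : ∀ i, ∑ j, P i j = 1)
    (hdpos : ∀ s, 0 < d s)
    (hstat : Matrix.vecMul d P = d)
    (hγ0 : 0 < γ) (hγ1 : γ < 1)
    (hΦ : Φ.rank = n) :
    let D : Matrix (Fin N) (Fin N) ℝ := Matrix.diagonal d
    let M : Matrix (Fin n) (Fin n) ℝ := Φᵀ * D * (γ • P - 1) * Φ
    (∀ x : Fin n → ℝ, x ≠ 0 → x ⬝ᵥ (M + Mᵀ).mulVec x < 0) ∧ IsUnit M := by
  intro D M
  have hP : P ∈ rowStochastic ℝ (Fin N) := mem_rowStochastic_iff_sum.2 ⟨hPnonneg, hProw⟩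
  have hΦinj : Function.Injective Φ.mulVec :=
    Φ.mulVec_injective_of_rank_eq_card (by rw [hΦ, Fintype.card_fin])
  have hM (x : Fin n → ℝ) (hx : x ≠ 0) : x ⬝ᵥ M *ᵥ x < 0 := by
    rw [show M = Φᵀ * (D * (γ • P - 1)) * Φ by simp only [M, Matrix.mul_assoc],
      dotProduct_transpose_mul_mul_mulVec]
    exact dotProduct_diagonal_mul_smul_sub_one_mulVec_neg hP hdpos hstat hγ0.le hγ1
      (by simpa using hΦinj.ne hx)
  refine ⟨fun x hx => ?_, isUnit_of_dotProduct_mulVec_neg hM⟩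
  rw [dotProduct_add_transpose_mulVec]
  linarith [hM x hx]

/-- The symmetric part of the `n×n` matrix `ΦᵀD(γP − I)Φ` is
negative definite, i.e. `ΦᵀD(γP − I)Φ + Φᵀ(γP − I)ᵀDΦ ≺ 0`; consequently
`ΦᵀD(γP − I)Φ` is invertible. -/
theorem td_matrix_symmetric_part_negative_definite
    (N n : ℕ) (hN : 0 < N) (hn : 0 < n) (hnN : n ≤ N)
    (P : Matrix (Fin N) (Fin N) ℝ) (d : Fin N → ℝ) (γ : ℝ)
    (Φ : Matrix (Fin N) (Fin n) ℝ)
    (hPnonneg : ∀ i j, 0 ≤ P i j)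
    (hProw : ∀ i, ∑ j, P i j = 1)
    (hdpos : ∀ s, 0 < d s)
    (hdsum : ∑ s, d s = 1)
    (hstat : Matrix.vecMul d P = d)
    (hγ0 : 0 < γ) (hγ1 : γ < 1)
    (hΦ : Φ.rank = n) :
    let D : Matrix (Fin N) (Fin N) ℝ := Matrix.diagonal d
    let M : Matrix (Fin n) (Fin n) ℝ := Φᵀ * D * (γ • P - 1) * Φ
    (∀ x : Fin n → ℝ, x ≠ 0 → x ⬝ᵥ (M + Mᵀ).mulVec x < 0) ∧ IsUnit M :=
  td_matrix_symmetric_part_negative_definite_general N n P d γ Φ hPnonneg hProw hdpos hstat hγ0 hγ1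
    hΦ
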